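/- arXiv:2303.00649 — 2 statements merged into one kernel-verified Lean document; each statement's English description precedes it below -/
import Mathlib

section
/- Let X be a metric space and γ:[0,1]→X an L-Lipschitz curve. If g:X→[0,∞] is lower semicontinuous, then ∫_γ g ds ≤ ∫_0^1 g(γ(t))·L dt. -/
open MeasureTheory Metric Set ENNReal NNReal Filter

noncomputable section

variable {X : Type*} [MetricSpace X] [MeasurableSpace X]

/-- The length of a curve `γ : [0,1] → X`. -/
def curveLen (γ : ℝ → X) : ℝ≥0∞ := eVariationOn γ (Set.Icc 0 1)

/-- A curve is a continuous map on `[0,1]`. -/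
def IsCurve (γ : ℝ → X) : Prop := ContinuousOn γ (Set.Icc 0 1)

/-- A rectifiable curve: continuous with finite length. -/
def IsRectCurve (γ : ℝ → X) : Prop := IsCurve γ ∧ curveLen γ < ⊤

/-- Constant speed parametrization on `[0,1]`: the metric speed equals the length a.e. -/
def IsConstSpeed (γ : ℝ → X) : Prop :=
  HasConstantSpeedOnWith γ (Set.Icc 0 1) (curveLen γ).toNNReal

/-- The path (arc-length) integral `∫_γ g ds` of `g : X → [0,∞]` along a curve `γ`,
computed through the arc-length (natural) parametrization. -/
def pathIntegral (g : X → ℝ≥0∞) (γ : ℝ → X) : ℝ≥0∞ :=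
  ∫⁻ s in Set.Icc (0:ℝ) (curveLen γ).toReal,
    g (naturalParameterization γ (Set.Icc 0 1) 0 s)

/-- `g` is an upper gradient of `f` on the set `A`. -/
def IsUpperGradientOn (g : X → ℝ≥0∞) (f : X → ℝ) (A : Set X) : Prop :=
  ∀ γ : ℝ → X, IsRectCurve γ → (∀ t ∈ Set.Icc (0:ℝ) 1, γ t ∈ A) →
    ENNReal.ofReal |f (γ 1) - f (γ 0)| ≤ pathIntegral g γ

/-- `g` is an upper gradient of `f`. -/
def IsUpperGradient (g : X → ℝ≥0∞) (f : X → ℝ) : Prop :=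
  IsUpperGradientOn g f Set.univ

/-- Membership in the Newtonian space `N^{1,p}(X)`. -/
def MemN1p (p : ℝ) (μ : Measure X) (f : X → ℝ) : Prop :=
  MemLp f (ENNReal.ofReal p) μ ∧
    ∃ g : X → ℝ≥0∞, IsUpperGradient g f ∧ ∫⁻ x, g x ^ p ∂μ < ⊤

/-- `‖f‖_{N^{1,p}}^p` as an extended real: `‖f‖_p^p + inf over upper gradients of ‖g‖_p^p`. -/
def N1pEnorm (p : ℝ) (μ : Measure X) (f : X → ℝ) : ℝ≥0∞ :=
  (∫⁻ x, ENNReal.ofReal |f x| ^ p ∂μ) +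
    ⨅ (g : X → ℝ≥0∞) (_ : IsUpperGradient g f), ∫⁻ x, g x ^ p ∂μ

/-- The Sobolev capacity `Cap_p(E)`. -/
def sobCap (p : ℝ) (μ : Measure X) (E : Set X) : ℝ≥0∞ :=
  ⨅ (u : X → ℝ) (_ : MemN1p p μ u ∧ ∀ x ∈ E, 1 ≤ u x), N1pEnorm p μ u

/-- The `p`-modulus of a curve family. -/
def pModulus (p : ℝ) (μ : Measure X) (Γ : Set (ℝ → X)) : ℝ≥0∞ :=
  ⨅ (ρ : X → ℝ≥0∞) (_ : Measurable ρ ∧ ∀ γ ∈ Γ, 1 ≤ pathIntegral ρ γ),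
    ∫⁻ x, ρ x ^ p ∂μ

/-- `g` is a `p`-weak upper gradient of `f`. -/
def IsWeakUpperGradient (p : ℝ) (μ : Measure X) (g : X → ℝ≥0∞) (f : X → ℝ) : Prop :=
  ∃ Γ₀ : Set (ℝ → X), pModulus p μ Γ₀ = 0 ∧
    ∀ γ : ℝ → X, IsRectCurve γ → γ ∉ Γ₀ →
      ENNReal.ofReal |f (γ 1) - f (γ 0)| ≤ pathIntegral g γ

/-- Every sequence in `S` has a subsequence converging uniformly on `[0,1]`. -/
def UnifConvSubseq (S : Set (ℝ → X)) : Prop :=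
  ∀ γs : ℕ → (ℝ → X), (∀ i, γs i ∈ S) →
    ∃ φ : ℕ → ℕ, StrictMono φ ∧ ∃ γ : ℝ → X,
      TendstoUniformlyOn (fun n => γs (φ n)) γ Filter.atTop (Set.Icc 0 1)

/-- A good function in the sense of the paper: for any family of rectifiable curves,
bounded Borel set `A`, and `δ, L > 0`, the subfamily of constant-speed curves contained in `A`,
with `∫_γ g ≤ L` and `diam(γ) ≥ δ`, is precompact for uniform convergence. -/
def GoodFunction (g : X → ℝ≥0∞) : Prop :=
  ∀ (Γ : Set (ℝ → X)) (A : Set X), (∀ γ ∈ Γ, IsRectCurve γ) →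
    Bornology.IsBounded A → MeasurableSet A → ∀ δ L : ℝ, 0 < δ → 0 < L →
    UnifConvSubseq {γ | γ ∈ Γ ∧ IsConstSpeed γ ∧ (∀ t ∈ Set.Icc (0:ℝ) 1, γ t ∈ A) ∧
      pathIntegral g γ ≤ ENNReal.ofReal L ∧ δ ≤ Metric.diam (γ '' Set.Icc 0 1)}

/-- Length of the discrete path `(p 0, …, p n)`. -/
def dLen (p : ℕ → X) (n : ℕ) : ℝ := ∑ k ∈ Finset.range n, dist (p k) (p (k+1))

/-- Mesh of the discrete path `(p 0, …, p n)`. -/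
def dMesh (p : ℕ → X) (n : ℕ) : ℝ :=
  (((Finset.range n).sup fun k => nndist (p k) (p (k+1))) : ℝ≥0)

/-- Time-partition points of the discrete path `(p 0, …, p n)`. -/
def tPt (p : ℕ → X) (n : ℕ) (l : ℕ) : ℝ :=
  (∑ k ∈ Finset.range l, dist (p k) (p (k+1))) / dLen p n

/-- The value `h(p 0) + ∑ g(p k) d(p k, p (k+1))` of a discrete path. -/
def dPathVal (g h : X → ℝ) (n : ℕ) (p : ℕ → X) : ℝ :=
  h (p 0) + ∑ k ∈ Finset.range n, g (p k) * dist (p k) (p (k+1))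

/-- Admissible discrete paths from `E` to `y` of mesh at most `δ` (non-repeating). -/
def dAdm (E : Set X) (δ : ℝ) (y : X) (n : ℕ) (p : ℕ → X) : Prop :=
  p 0 ∈ E ∧ p n = y ∧ (∀ k ≤ n, ∀ l ≤ n, p k = p l → k = l) ∧
    ∀ k < n, dist (p k) (p (k+1)) ≤ δ

/-- `f(y) = min(inf over admissible discrete paths of h(p₀) + ∑ g(p_k)d(p_k,p_{k+1}), M)`. -/
def dInfFun (E : Set X) (δ M : ℝ) (g h : X → ℝ) (y : X) : ℝ :=
  sInf (insert M {v : ℝ | ∃ (n : ℕ) (p : ℕ → X), dAdm E δ y n p ∧ v = dPathVal g h n p})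

/-- The function `u(x) = min(inf {∫_γ g ds : γ from X∖V to x}, 1)`. -/
def minCurveFun (V : Set X) (g : X → ℝ≥0∞) (x : X) : ℝ :=
  (min 1 (⨅ (γ : ℝ → X) (_ : IsRectCurve γ ∧ γ 0 ∉ V ∧ γ 1 = x),
    pathIntegral g γ)).toReal

/-- Condenser capacity `Cap_p(E,F)`. -/
def condCap (p : ℝ) (μ : Measure X) (E F : Set X) : ℝ≥0∞ :=
  ⨅ (u : X → ℝ) (g : X → ℝ≥0∞)
    (_ : IsUpperGradient g u ∧ (∀ x ∈ E, u x = 0) ∧ (∀ x ∈ F, u x = 1)),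
    ∫⁻ x, g x ^ p ∂μ

/-- Condenser capacity computed with Lipschitz admissible functions. -/
def condCapLip (p : ℝ) (μ : Measure X) (E F : Set X) : ℝ≥0∞ :=
  ⨅ (u : X → ℝ) (g : X → ℝ≥0∞)
    (_ : (∃ K : ℝ≥0, LipschitzWith K u) ∧ IsUpperGradient g u ∧
      (∀ x ∈ E, u x = 0) ∧ (∀ x ∈ F, u x = 1)),
    ∫⁻ x, g x ^ p ∂μ

/-- Membership in the Newtonian space `N^{1,p}(U)` of an open subset `U`. -/
def MemN1pOn (p : ℝ) (μ : Measure X) (f : X → ℝ) (U : Set X) : Prop :=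
  MemLp f (ENNReal.ofReal p) (μ.restrict U) ∧
    ∃ g : X → ℝ≥0∞, IsUpperGradientOn g f U ∧ ∫⁻ x in U, g x ^ p ∂μ < ⊤

/-- `‖f‖_{N^{1,p}(U)}^p` for an open subset `U`. -/
def N1pEnormOn (p : ℝ) (μ : Measure X) (f : X → ℝ) (U : Set X) : ℝ≥0∞ :=
  (∫⁻ x in U, ENNReal.ofReal |f x| ^ p ∂μ) +
    ⨅ (g : X → ℝ≥0∞) (_ : IsUpperGradientOn g f U), ∫⁻ x in U, g x ^ p ∂μ

end

/-- A metric space is locally complete if every point has a complete neighborhood. -/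
def LocallyCompleteSpace (Y : Type*) [MetricSpace Y] : Prop :=
  ∀ y : Y, ∃ U ∈ nhds y, IsComplete U

/-!
Let `V t` be the length of `γ` on `[0, t]`. It is `L`-Lipschitz, runs from `0` to `Len(γ)`, and
the arc-length parametrization `γ̃` satisfies `γ̃ (V t) = γ t`. Since an `L`-Lipschitz map of an
interval covers the interval between its endpoint values and multiplies Lebesgue measure by at
most `L`, Lebesgue measure on `[0, Len(γ)]` is dominated by the push-forward under `V` of `L` times
Lebesgue measure on `[0, 1]`, which gives `∫_γ g ds ≤ L ∫₀¹ g(γ̃ (V t)) dt = L ∫₀¹ g(γ t) dt`.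
-/

theorem LipschitzWith.restrict_Icc_le_map_smul {W : ℝ → ℝ} {K : ℝ≥0} (hW : LipschitzWith K W)
    {a b : ℝ} (hab : a ≤ b) :
    volume.restrict (Icc (W a) (W b)) ≤ ((K : ℝ≥0∞) • volume.restrict (Icc a b)).map W := by
  refine Measure.le_iff.2 fun A hA => ?_
  have hWA : MeasurableSet (W ⁻¹' A) := hW.continuous.measurable hA
  rw [Measure.map_apply hW.continuous.measurable hA, Measure.restrict_apply hA,
    Measure.smul_apply, Measure.restrict_apply hWA, smul_eq_mul]
  have hcover : A ∩ Icc (W a) (W b) ⊆ W '' (W ⁻¹' A ∩ Icc a b) := by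
    rintro x ⟨hxA, hx⟩
    obtain ⟨t, ht, rfl⟩ := intermediate_value_Icc hab hW.continuous.continuousOn hx
    exact ⟨t, ⟨hxA, ht⟩, rfl⟩
  calc volume (A ∩ Icc (W a) (W b)) ≤ μH[1] (W '' (W ⁻¹' A ∩ Icc a b)) := by
        rw [hausdorffMeasure_real]; exact measure_mono hcover
    _ ≤ (K : ℝ≥0∞) ^ (1 : ℝ) * μH[1] (W ⁻¹' A ∩ Icc a b) :=
        hW.hausdorffMeasure_image_le zero_le_one _
    _ = K * volume (W ⁻¹' A ∩ Icc a b) := by rw [hausdorffMeasure_real, ENNReal.rpow_one]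

theorem LipschitzOnWith.setLIntegral_Icc_le_mul_setLIntegral_comp {W : ℝ → ℝ} {K : ℝ≥0}
    {a b : ℝ} (hW : LipschitzOnWith K W (Icc a b)) (hab : a ≤ b) (f : ℝ → ℝ≥0∞) :
    ∫⁻ x in Icc (W a) (W b), f x ≤ K * ∫⁻ t in Icc a b, f (W t) := by
  obtain ⟨W', hW', hWW'⟩ := hW.extend_real
  rw [hWW' (left_mem_Icc.2 hab), hWW' (right_mem_Icc.2 hab),
    setLIntegral_congr_fun measurableSet_Icc fun t ht => congrArg f (hWW' ht)]
  calc ∫⁻ x in Icc (W' a) (W' b), f x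
      ≤ ∫⁻ x, f x ∂((K : ℝ≥0∞) • volume.restrict (Icc a b)).map W' :=
        lintegral_mono' (hW'.restrict_Icc_le_map_smul hab) le_rfl
    _ ≤ ∫⁻ t, f (W' t) ∂((K : ℝ≥0∞) • volume.restrict (Icc a b)) := lintegral_map_le _ _
    _ = K * ∫⁻ t in Icc a b, f (W' t) := by rw [lintegral_smul_measure, smul_eq_mul]

section Variation

variable {E : Type*} [PseudoEMetricSpace E] {f : ℝ → E} {L : ℝ≥0} {s : Set ℝ}

theorem LipschitzOnWith.variationOnFromTo_le (hf : LipschitzOnWith L f s) {x y : ℝ} (hx : x ∈ s)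
    (hy : y ∈ s) (hxy : x ≤ y) : variationOnFromTo f s x y ≤ L * (y - x) := by
  rw [variationOnFromTo.eq_of_le f s hxy]
  refine ENNReal.toReal_le_of_le_ofReal (by positivity) ?_
  calc eVariationOn (f ∘ id) (s ∩ Icc x y) ≤ L * eVariationOn id (s ∩ Icc x y) :=
        hf.comp_eVariationOn_le fun _ hz => hz.1
    _ ≤ L * ENNReal.ofReal (y - x) := by
        gcongr; exact ((monotone_id.monotoneOn s).eVariationOn_eq hx hy).le
    _ = ENNReal.ofReal (L * (y - x)) := by
        rw [ENNReal.ofReal_mul L.coe_nonneg, ENNReal.ofReal_coe_nnreal]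

theorem LipschitzOnWith.lipschitzOnWith_variationOnFromTo (hf : LipschitzOnWith L f s) {a : ℝ}
    (ha : a ∈ s) : LipschitzOnWith L (variationOnFromTo f s a) s := by
  have hbv : LocallyBoundedVariationOn f s := hf.locallyBoundedVariationOn
  refine LipschitzOnWith.of_le_add_mul L fun x hx y hy => ?_
  rcases le_total x y with hxy | hyx
  · have := variationOnFromTo.monotoneOn hbv ha hx hy hxy
    linarith [mul_nonneg L.coe_nonneg (dist_nonneg (x := x) (y := y))]
  · have hsub := variationOnFromTo.sub_right hbv ha hx hy
    have := hf.variationOnFromTo_le hy hx hyx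
    rw [Real.dist_eq, abs_of_nonneg (sub_nonneg.2 hyx)]
    linarith

end Variation

theorem LipschitzOnWith.setLIntegral_naturalParameterization_le {E : Type*} [EMetricSpace E]
    {γ : ℝ → E} {L : ℝ≥0} {a b : ℝ} (hγ : LipschitzOnWith L γ (Icc a b)) (hab : a ≤ b)
    (g : E → ℝ≥0∞) :
    ∫⁻ s in Icc 0 (eVariationOn γ (Icc a b)).toReal, g (naturalParameterization γ (Icc a b) a s)
      ≤ L * ∫⁻ t in Icc a b, g (γ t) := by
  have ha : a ∈ Icc a b := left_mem_Icc.2 hab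
  set V := variationOnFromTo γ (Icc a b) a with hV
  have hVa : V a = 0 := variationOnFromTo.self γ _ a
  have hVb : V b = (eVariationOn γ (Icc a b)).toReal := by
    rw [hV, variationOnFromTo.eq_of_le γ _ hab, inter_self]
  have hγV : ∀ t ∈ Icc a b, naturalParameterization γ (Icc a b) a (V t) = γ t := fun _ ht =>
    edist_eq_zero.1 (edist_naturalParameterization_eq_zero hγ.locallyBoundedVariationOn ha ht)
  calc ∫⁻ s in Icc 0 (eVariationOn γ (Icc a b)).toReal, g (naturalParameterization γ (Icc a b) a s)
      = ∫⁻ s in Icc (V a) (V b), g (naturalParameterization γ (Icc a b) a s) := by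
        rw [hVa, hVb]
    _ ≤ L * ∫⁻ t in Icc a b, g (naturalParameterization γ (Icc a b) a (V t)) :=
        (hγ.lipschitzOnWith_variationOnFromTo ha).setLIntegral_Icc_le_mul_setLIntegral_comp hab _
    _ = L * ∫⁻ t in Icc a b, g (γ t) := by
        rw [setLIntegral_congr_fun measurableSet_Icc fun t ht => congrArg g (hγV t ht)]

theorem stmt2_general {X : Type*} [MetricSpace X]
    (γ : ℝ → X) (L : ℝ≥0)
    (hlip : LipschitzOnWith L γ (Set.Icc 0 1))
    (g : X → ℝ≥0∞) :
    pathIntegral g γ ≤ ∫⁻ t in Set.Icc (0:ℝ) 1, g (γ t) * (L : ℝ≥0∞) := by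
  calc pathIntegral g γ ≤ L * ∫⁻ t in Icc (0:ℝ) 1, g (γ t) :=
        hlip.setLIntegral_naturalParameterization_le zero_le_one g
    _ = ∫⁻ t in Icc (0:ℝ) 1, g (γ t) * L := by
        rw [lintegral_mul_const' _ _ ENNReal.coe_ne_top, mul_comm]

/-- path integral of a lower semicontinuous function along an
`L`-Lipschitz curve is at most `∫₀¹ g(γ(t))·L dt`. -/
theorem stmt2 {X : Type*} [MetricSpace X]
    (γ : ℝ → X) (L : ℝ≥0)
    (hγ : IsCurve γ) (hlip : LipschitzOnWith L γ (Set.Icc 0 1))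
    (g : X → ℝ≥0∞) (hg : LowerSemicontinuous g) :
    pathIntegral g γ ≤ ∫⁻ t in Set.Icc (0:ℝ) 1, g (γ t) * (L : ℝ≥0∞) :=
  stmt2_general γ L hlip g
end

section
/- Let X be a metric space, δ, M > 0, E ⊂ X a non-empty set, g:X→[0,∞) continuous, and h:E→ℝ bounded. Define f(y) = min( inf_P { h(p_0) + ∑_{k=0}^{n-1} g(p_k)d(p_k,p_{k+1}) }, M ), where the infimum is over all discrete paths P = (p_0,…,p_n) with p_0 ∈ E, p_n = y, and Mesh(P) ≤ δ. Then f is locally Lipschitz and g is an upper gradient of f. -/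
open MeasureTheory Metric Set ENNReal NNReal Filter

/-! Extending an admissible path that ends at `y` by the step to `z` (or cutting it at `z` if it
already passes through `z`) gives `f z ≤ f y + g y * d(y, z)` whenever `d(y, z) ≤ δ`. With `g`
continuous, this one-step inequality makes `f` locally Lipschitz. Along the arc-length
parametrization `c` of a rectifiable curve, which is 1-Lipschitz, it bounds the right Dini
derivative of `f ∘ c` by `g ∘ c`, and the comparison theorem for Dini derivatives integrates this
to `|f (γ 1) - f (γ 0)| ≤ ∫_γ g ds`. -/

open Topology

section Variation

theorem HasConstantSpeedOnWith.lipschitzOnWith {E : Type*} [PseudoEMetricSpace E] {f : ℝ → E}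
    {s : Set ℝ} {l : ℝ≥0} (hf : HasConstantSpeedOnWith f s l) : LipschitzOnWith l f s := by
  intro x hx y hy
  wlog hxy : x ≤ y generalizing x y
  · rw [edist_comm, edist_comm x]
    exact this hy hx (le_of_not_ge hxy)
  calc edist (f x) (f y) ≤ eVariationOn f (s ∩ Icc x y) :=
        eVariationOn.edist_le f ⟨hx, le_rfl, hxy⟩ ⟨hy, hxy, le_rfl⟩
    _ = l * edist x y := by
        rw [hf hx hy, ENNReal.ofReal_mul l.coe_nonneg, edist_dist, Real.dist_eq, abs_sub_comm,
          abs_of_nonneg (sub_nonneg.2 hxy), ENNReal.ofReal_coe_nnreal]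

theorem continuousOn_variationOnFromTo {α E : Type*} [LinearOrder α] [TopologicalSpace α]
    [OrderTopology α] [PseudoMetricSpace E] {f : α → E} {s : Set α} {a : α}
    (hf : LocallyBoundedVariationOn f s) (hc : ContinuousOn f s) (ha : a ∈ s) :
    ContinuousOn (variationOnFromTo f s a) s := by
  intro b hb
  have hs : s ⊆ insert b ((s ∩ Iio b) ∪ (s ∩ Ioi b)) := by
    intro x hx
    rcases lt_trichotomy x b with h | rfl | h <;> simp [*]
  refine ContinuousWithinAt.mono ?_ hs
  rw [continuousWithinAt_insert_self, continuousWithinAt_union]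
  constructor
  · simpa [ContinuousWithinAt] using
      variationOnFromTo.tendsto_left ha hb hf ((hc b hb).mono inter_subset_left)
  · simpa [ContinuousWithinAt] using
      variationOnFromTo.tendsto_right ha hb hf ((hc b hb).mono inter_subset_left)

variable {E : Type*} [MetricSpace E] {f : ℝ → E} {a b : ℝ}

theorem naturalParameterization_variationOnFromTo {s : Set ℝ}
    (hf : LocallyBoundedVariationOn f s) (ha : a ∈ s) (hb : b ∈ s) :
    naturalParameterization f s a (variationOnFromTo f s a b) = f b :=
  edist_eq_zero.mp (edist_naturalParameterization_eq_zero hf ha hb)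

theorem lipschitzOnWith_naturalParameterization (hab : a ≤ b)
    (hf : BoundedVariationOn f (Icc a b)) (hc : ContinuousOn f (Icc a b)) :
    LipschitzOnWith 1 (naturalParameterization f (Icc a b) a)
      (Icc 0 (variationOnFromTo f (Icc a b) a b)) := by
  have ha : a ∈ Icc a b := left_mem_Icc.2 hab
  have hf' := hf.locallyBoundedVariationOn
  have himage := (continuousOn_variationOnFromTo hf' hc ha).image_Icc_of_monotoneOn hab
    (variationOnFromTo.monotoneOn hf' ha)
  rw [variationOnFromTo.self] at himage
  rw [← himage]
  exact (has_unit_speed_naturalParameterization f hf' ha).lipschitzOnWith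

end Variation

theorem sub_le_integral_of_forall_eventually_sub_le_mul {F φ : ℝ → ℝ} {a b : ℝ} (hab : a ≤ b)
    (hF : ContinuousOn F (Icc a b)) (hφ : Continuous φ)
    (hslope : ∀ x ∈ Ico a b, ∀ᶠ z in 𝓝[>] x, F z - F x ≤ φ x * (z - x)) :
    F b - F a ≤ ∫ t in a..b, φ t := by
  have hB : ∀ x, HasDerivAt (fun u => F a + ∫ t in a..u, φ t) (φ x) x := fun x =>
    ((hφ.integral_hasStrictDerivAt a x).hasDerivAt).const_add _
  have key := image_le_of_liminf_slope_right_le_deriv_boundary hF (by simp)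
    (fun x _ => (hB x).continuousAt.continuousWithinAt) (fun x _ => (hB x).hasDerivWithinAt)
    (fun x hx r hr => ?_) (right_mem_Icc.2 hab)
  · linarith
  refine Filter.Eventually.frequently ?_
  filter_upwards [hslope x hx, self_mem_nhdsWithin] with z hz hxz
  have hxz : x < z := hxz
  rw [slope_def_field, div_lt_iff₀ (sub_pos.2 hxz)]
  nlinarith [sub_pos.2 hxz]

section UpperGradient

variable {X : Type*} [MetricSpace X] {f ρ : X → ℝ} {δ : ℝ}

theorem locallyLipschitz_of_le_add_mul_dist (hδ : 0 < δ) (hρ : Continuous ρ)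
    (hstep : ∀ y z, dist y z ≤ δ → f z ≤ f y + ρ y * dist y z) : LocallyLipschitz f := by
  intro x
  obtain ⟨r, hr, hball⟩ := Metric.isOpen_iff.mp (isOpen_lt hρ continuous_const) x
    (show ρ x < ρ x + 1 by linarith)
  refine ⟨(ρ x + 1).toNNReal, ball x (min r (δ / 2)),
    ball_mem_nhds x (lt_min hr (half_pos hδ)), LipschitzOnWith.of_dist_le_mul fun y hy z hz => ?_⟩
  have hρy : ρ y < ρ x + 1 := hball (ball_subset_ball (min_le_left _ _) hy)
  have hρz : ρ z < ρ x + 1 := hball (ball_subset_ball (min_le_left _ _) hz)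
  have hyz : dist y z ≤ δ := by
    have := dist_triangle_right y z x
    linarith [mem_ball.1 hy, mem_ball.1 hz, min_le_right r (δ / 2)]
  have hmul : (ρ x + 1) * dist y z ≤ (ρ x + 1).toNNReal * dist y z :=
    mul_le_mul_of_nonneg_right (Real.le_coe_toNNReal _) dist_nonneg
  rw [Real.dist_eq, abs_sub_le_iff]
  constructor
  · have := hstep z y (dist_comm y z ▸ hyz)
    rw [dist_comm z y] at this
    nlinarith [dist_nonneg (x := y) (y := z)]
  · have := hstep y z hyz
    nlinarith [dist_nonneg (x := y) (y := z)]

theorem sub_le_integral_comp_of_le_add_mul_dist (hδ : 0 < δ) (hρ : Continuous ρ)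
    (hρ0 : ∀ x, 0 ≤ ρ x) (hf : Continuous f)
    (hstep : ∀ y z, dist y z ≤ δ → f z ≤ f y + ρ y * dist y z)
    {c : ℝ → X} (hc : LipschitzWith 1 c) {a b : ℝ} (hab : a ≤ b) :
    f (c b) - f (c a) ≤ ∫ t in a..b, ρ (c t) := by
  refine sub_le_integral_of_forall_eventually_sub_le_mul hab (hf.comp hc.continuous).continuousOn
    (hρ.comp hc.continuous) fun x _ => ?_
  filter_upwards [Ioo_mem_nhdsGT (show x < x + δ by linarith)] with z hz
  have hdist : dist (c x) (c z) ≤ z - x := by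
    simpa [Real.dist_eq, abs_of_neg (sub_neg.2 hz.1)] using hc.dist_le_mul x z
  have := hstep (c x) (c z) (by linarith [hz.2])
  have := mul_le_mul_of_nonneg_left hdist (hρ0 (c x))
  simp only [Function.comp_apply]
  linarith

theorem abs_sub_le_integral_comp_of_le_add_mul_dist (hδ : 0 < δ) (hρ : Continuous ρ)
    (hρ0 : ∀ x, 0 ≤ ρ x) (hf : Continuous f)
    (hstep : ∀ y z, dist y z ≤ δ → f z ≤ f y + ρ y * dist y z)
    {c : ℝ → X} (hc : LipschitzWith 1 c) {a b : ℝ} (hab : a ≤ b) :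
    |f (c b) - f (c a)| ≤ ∫ t in a..b, ρ (c t) := by
  have hrev : LipschitzWith 1 (fun t => c (a + b - t)) := by
    refine LipschitzWith.of_dist_le_mul fun s t => ?_
    simpa only [dist_sub_left] using hc.dist_le_mul (a + b - s) (a + b - t)
  have hback := sub_le_integral_comp_of_le_add_mul_dist hδ hρ hρ0 hf hstep hrev hab
  rw [intervalIntegral.integral_comp_sub_left (fun t => ρ (c t))] at hback
  simp only [add_sub_cancel_left, add_sub_cancel_right] at hback
  rw [abs_sub_le_iff]
  exact ⟨sub_le_integral_comp_of_le_add_mul_dist hδ hρ hρ0 hf hstep hc hab, hback⟩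

theorem isUpperGradient_of_le_add_mul_dist (hδ : 0 < δ) (hρ : Continuous ρ) (hρ0 : ∀ x, 0 ≤ ρ x)
    (hstep : ∀ y z, dist y z ≤ δ → f z ≤ f y + ρ y * dist y z) :
    IsUpperGradient (fun x => ENNReal.ofReal (ρ x)) f := by
  rintro γ ⟨hγc, hlen⟩ -
  have hbv : BoundedVariationOn γ (Icc 0 1) := hlen.ne
  set L := (curveLen γ).toReal
  have hL0 : 0 ≤ L := ENNReal.toReal_nonneg
  have hL : variationOnFromTo γ (Icc 0 1) 0 1 = L := by
    rw [variationOnFromTo.eq_of_le _ _ zero_le_one, inter_self]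
    rfl
  set γ' := naturalParameterization γ (Icc 0 1) 0
  have hlip : LipschitzOnWith 1 γ' (Icc 0 L) :=
    hL ▸ lipschitzOnWith_naturalParameterization zero_le_one hbv hγc
  have hγ'0 : γ' 0 = γ 0 := by
    simpa only [variationOnFromTo.self] using naturalParameterization_variationOnFromTo
      hbv.locallyBoundedVariationOn (left_mem_Icc.2 zero_le_one) (left_mem_Icc.2 zero_le_one)
  have hγ'L : γ' L = γ 1 := hL ▸ naturalParameterization_variationOnFromTo
    hbv.locallyBoundedVariationOn (left_mem_Icc.2 zero_le_one) (right_mem_Icc.2 zero_le_one)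
  set c := IccExtend hL0 ((Icc 0 L).domRestrict γ')
  have hc : LipschitzWith 1 c := by
    have := hlip.to_restrict.comp (LipschitzWith.projIcc hL0)
    rwa [mul_one] at this
  have hcγ' : EqOn c γ' (Icc 0 L) := fun t ht => IccExtend_of_mem hL0 _ ht
  have hbound := abs_sub_le_integral_comp_of_le_add_mul_dist hδ hρ hρ0
    (locallyLipschitz_of_le_add_mul_dist hδ hρ hstep).continuous hstep hc hL0
  rw [hcγ' (right_mem_Icc.2 hL0), hcγ' (left_mem_Icc.2 hL0), hγ'0, hγ'L] at hbound
  calc ENNReal.ofReal |f (γ 1) - f (γ 0)|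
      ≤ ENNReal.ofReal (∫ t in 0..L, ρ (c t)) := ENNReal.ofReal_le_ofReal hbound
    _ = ∫⁻ t in Icc 0 L, ENNReal.ofReal (ρ (c t)) := by
        rw [intervalIntegral.integral_of_le hL0, ← integral_Icc_eq_integral_Ioc]
        exact ofReal_integral_eq_lintegral_ofReal (hρ.comp hc.continuous).integrableOn_Icc
          (ae_of_all _ fun t => hρ0 _)
    _ = pathIntegral (fun x => ENNReal.ofReal (ρ x)) γ :=
        setLIntegral_congr_fun measurableSet_Icc fun t ht => by rw [hcγ' ht]

end UpperGradient

section DiscretePaths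

variable {X : Type*} [MetricSpace X] {E : Set X} {δ M : ℝ} {g h : X → ℝ} {y z : X} {n : ℕ}
  {p : ℕ → X}

theorem dPathVal_mono (hg0 : ∀ x, 0 ≤ g x) {k : ℕ} (hkn : k ≤ n) :
    dPathVal g h k p ≤ dPathVal g h n p :=
  add_le_add_right (Finset.sum_le_sum_of_subset_of_nonneg (Finset.range_subset_range.2 hkn)
    fun _ _ _ => mul_nonneg (hg0 _) dist_nonneg) _

theorem dAdm.truncate (hp : dAdm E δ y n p) {k : ℕ} (hkn : k ≤ n) : dAdm E δ (p k) k p :=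
  ⟨hp.1, rfl, fun a ha b hb => hp.2.2.1 a (ha.trans hkn) b (hb.trans hkn),
    fun a ha => hp.2.2.2 a (ha.trans_le hkn)⟩

theorem dAdm.extend (hp : dAdm E δ y n p) (hz : ∀ k ≤ n, p k ≠ z) (hyz : dist y z ≤ δ) :
    dAdm E δ z (n + 1) (fun k => if k ≤ n then p k else z) := by
  obtain ⟨hp0, hpn, hinj, hmesh⟩ := hp
  refine ⟨by simpa using hp0, by simp, fun a ha b hb hab => ?_, fun k hk => ?_⟩
  · rcases Nat.le_succ_iff.1 ha with ha | rfl <;> rcases Nat.le_succ_iff.1 hb with hb | rfl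
    · simp only [ha, hb, if_true] at hab
      exact hinj a ha b hb hab
    · simp only [ha, if_true, Nat.not_succ_le_self, if_false] at hab
      exact absurd hab (hz a ha)
    · simp only [hb, if_true, Nat.not_succ_le_self, if_false] at hab
      exact absurd hab.symm (hz b hb)
    · rfl
  · rcases Nat.lt_succ_iff_lt_or_eq.1 hk with hk | rfl
    · simpa [hk.le, Nat.succ_le_of_lt hk] using hmesh k hk
    · simpa [hpn] using hyz

theorem dPathVal_extend (hpn : p n = y) :
    dPathVal g h (n + 1) (fun k => if k ≤ n then p k else z) =
      dPathVal g h n p + g y * dist y z := by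
  have hsum : ∑ k ∈ Finset.range n, g (if k ≤ n then p k else z) *
      dist (if k ≤ n then p k else z) (if k + 1 ≤ n then p (k + 1) else z) =
      ∑ k ∈ Finset.range n, g (p k) * dist (p k) (p (k + 1)) :=
    Finset.sum_congr rfl fun k hk => by
      simp [(Finset.mem_range.1 hk).le, Nat.succ_le_of_lt (Finset.mem_range.1 hk)]
  simp only [dPathVal, Finset.sum_range_succ, hsum, le_refl, if_true, Nat.not_succ_le_self,
    if_false, Nat.zero_le, hpn]
  ring

theorem bddBelow_dPathVals (hg0 : ∀ x, 0 ≤ g x) (hh : BddBelow (h '' E)) (y : X) :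
    BddBelow (insert M {v | ∃ (n : ℕ) (p : ℕ → X), dAdm E δ y n p ∧ v = dPathVal g h n p}) := by
  obtain ⟨C, hC⟩ := hh
  refine ⟨min M C, ?_⟩
  rintro v (rfl | ⟨n, p, hp, rfl⟩)
  · exact min_le_left _ _
  · calc min M C ≤ h (p 0) := (min_le_right _ _).trans (hC ⟨_, hp.1, rfl⟩)
      _ = dPathVal g h 0 p := by simp [dPathVal]
      _ ≤ dPathVal g h n p := dPathVal_mono hg0 n.zero_le

theorem dInfFun_le_dPathVal (hg0 : ∀ x, 0 ≤ g x) (hh : BddBelow (h '' E))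
    (hp : dAdm E δ y n p) : dInfFun E δ M g h y ≤ dPathVal g h n p :=
  csInf_le (bddBelow_dPathVals hg0 hh y) (mem_insert_of_mem _ ⟨n, p, hp, rfl⟩)

theorem dInfFun_le_bound (hg0 : ∀ x, 0 ≤ g x) (hh : BddBelow (h '' E)) (y : X) :
    dInfFun E δ M g h y ≤ M :=
  csInf_le (bddBelow_dPathVals hg0 hh y) (mem_insert _ _)

theorem dInfFun_le_add_mul_dist (hg0 : ∀ x, 0 ≤ g x) (hh : BddBelow (h '' E))
    (hyz : dist y z ≤ δ) :
    dInfFun E δ M g h z ≤ dInfFun E δ M g h y + g y * dist y z := by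
  have hlast : 0 ≤ g y * dist y z := mul_nonneg (hg0 y) dist_nonneg
  rw [← sub_le_iff_le_add]
  refine le_csInf ⟨M, mem_insert _ _⟩ ?_
  rintro v (hv | ⟨n, p, hp, rfl⟩) <;> rw [sub_le_iff_le_add]
  · rw [hv]
    linarith [dInfFun_le_bound (δ := δ) (M := M) hg0 hh z]
  by_cases hz : ∃ k ≤ n, p k = z
  · obtain ⟨k, hkn, rfl⟩ := hz
    linarith [dInfFun_le_dPathVal (M := M) hg0 hh (hp.truncate hkn),
      dPathVal_mono (h := h) (p := p) hg0 hkn]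
  · push Not at hz
    rw [← dPathVal_extend hp.2.1]
    exact dInfFun_le_dPathVal hg0 hh (hp.extend hz hyz)

end DiscretePaths

theorem stmt5_general {X : Type*} [MetricSpace X]
    (E : Set X) (delta M : ℝ) (hdelta : 0 < delta)
    (g : X → ℝ) (hgc : Continuous g) (hg0 : ∀ x, 0 ≤ g x)
    (h : X → ℝ) (hb : ∃ C : ℝ, ∀ x ∈ E, |h x| ≤ C) :
    LocallyLipschitz (dInfFun E delta M g h) ∧
      IsUpperGradient (fun x => ENNReal.ofReal (g x)) (dInfFun E delta M g h) := by
  obtain ⟨C, hC⟩ := hb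
  have hh : BddBelow (h '' E) := ⟨-C, by
    rintro _ ⟨x, hx, rfl⟩
    exact neg_le_of_abs_le (hC x hx)⟩
  have hstep : ∀ y z, dist y z ≤ delta →
      dInfFun E delta M g h z ≤ dInfFun E delta M g h y + g y * dist y z :=
    fun _ _ => dInfFun_le_add_mul_dist hg0 hh
  exact ⟨locallyLipschitz_of_le_add_mul_dist hdelta hgc hstep,
    isUpperGradient_of_le_add_mul_dist hdelta hgc hg0 hstep⟩

/-- the discrete-path infimum function is locally Lipschitz and has `g`
as an upper gradient. -/
theorem stmt5 {X : Type*} [MetricSpace X] [MeasurableSpace X]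
    (E : Set X) (hE : E.Nonempty) (delta M : ℝ) (hdelta : 0 < delta) (hM : 0 < M)
    (g : X → ℝ) (hgc : Continuous g) (hg0 : ∀ x, 0 ≤ g x)
    (h : X → ℝ) (hb : ∃ C : ℝ, ∀ x ∈ E, |h x| ≤ C) :
    LocallyLipschitz (dInfFun E delta M g h) ∧
      IsUpperGradient (fun x => ENNReal.ofReal (g x)) (dInfFun E delta M g h) :=
  stmt5_general E delta M hdelta g hgc hg0 h hb
end
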